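/- arXiv:2309.16978 — 7 statements merged into one kernel-verified Lean document; each statement's English description precedes it below -/
import Mathlib

section
/- Let q be an odd prime power with q ≡ -1 (mod 3). Then the number of s in F_q such that s^2 - s + 1 is a non-zero square in F_q is (q-1)/2, and s^2 - s + 1 has no roots in F_q. -/
/-- Over a finite field `F` with `q` elements, `q` an odd prime power with `q ≡ -1 (mod 3)`
(characteristic greater than 3), the number of `s ∈ F` with `s^2 - s + 1` a non-zero square
is `(q-1)/2`, and `s^2 - s + 1` has no roots in `F`. -/
theorem stmt_0 (q : ℕ) (F : Type*) [Field F] [Fintype F]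
    (hcard : Fintype.card F = q) (hodd : Odd q) (hchar : 3 < ringChar F)
    (hq3 : q % 3 = 2) :
    Nat.card {s : F // s ^ 2 - s + 1 ≠ 0 ∧ ∃ b : F, s ^ 2 - s + 1 = b ^ 2} = (q - 1) / 2 ∧
    ∀ s : F, s ^ 2 - s + 1 ≠ 0 := by
  classical
  -- characteristic facts
  have hchar2 : (2 : F) ≠ 0 := by
    intro h
    have h2 := (CharP.cast_eq_zero_iff F (ringChar F) 2).mp (by exact_mod_cast h)
    have := Nat.le_of_dvd (by norm_num) h2
    omega
  have hchar3 : (3 : F) ≠ 0 := by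
    intro h
    have h3 := (CharP.cast_eq_zero_iff F (ringChar F) 3).mp (by exact_mod_cast h)
    have := Nat.le_of_dvd (by norm_num) h3
    omega
  have hchar4 : (4 : F) ≠ 0 := by
    intro h
    have h4 : (2 : F) * 2 = 0 := by linear_combination h
    rcases mul_eq_zero.mp h4 with h' | h' <;> exact hchar2 h'
  -- Part 2: no roots
  have h0 : ∀ s : F, s ^ 2 - s + 1 ≠ 0 := by
    intro s hs
    have hs2 : s ^ 2 = s - 1 := by linear_combination hs
    have hs3 : s ^ 3 = -1 := by linear_combination (s + 1) * hs
    have hsne : s ≠ 0 := by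
      intro h; rw [h] at hs; norm_num at hs
    have hs6 : s ^ 6 = 1 := by
      have h6 : s ^ 6 = (s ^ 3) ^ 2 := by ring
      rw [h6, hs3]; ring
    have hd6 : orderOf s ∣ 6 := orderOf_dvd_of_pow_eq_one hs6
    have hdq : orderOf s ∣ q - 1 := by
      apply orderOf_dvd_of_pow_eq_one
      rw [← hcard]
      exact FiniteField.pow_card_sub_one_eq_one s hsne
    have h3nd : ¬ (3 ∣ orderOf s) := by
      intro h3
      have hq1 : (3 : ℕ) ∣ q - 1 := h3.trans hdq
      omega
    have hcop : Nat.Coprime (orderOf s) 3 :=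
      ((Nat.Prime.coprime_iff_not_dvd (by norm_num)).mpr h3nd).symm
    have hd6' : orderOf s ∣ 2 * 3 := by simpa using hd6
    have hd2 : orderOf s ∣ 2 := hcop.dvd_of_dvd_mul_right hd6'
    have hsq1 : s ^ 2 = 1 := orderOf_dvd_iff_pow_eq_one.mp hd2
    have hseq : s = 2 := by linear_combination hsq1 - hs2
    rw [hseq] at hs
    apply hchar3
    linear_combination hs
  -- -3 is not a square
  have hns : ∀ b : F, b ^ 2 ≠ -3 := by
    intro b hb
    apply h0 ((1 + b) / 2)
    have he : ((1 + b) / 2) ^ 2 - (1 + b) / 2 + 1 = (b ^ 2 + 3) / 4 := by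
      field_simp; ring
    rw [he, hb]
    norm_num
  refine ⟨?_, h0⟩
  -- the counting part
  set P : F → Prop := fun s => s ^ 2 - s + 1 ≠ 0 ∧ ∃ b : F, s ^ 2 - s + 1 = b ^ 2 with hP
  set S : Finset F := Finset.univ.filter P with hS
  set A : Finset F := Finset.univ.filter (fun t : F => t ≠ 0) with hA
  set f : F → F := fun t => (3 * t⁻¹ - t + 2) / 4 with hf
  -- f maps A into S
  have hmaps : ∀ t ∈ A, f t ∈ S := by
    intro t ht
    rw [hA, Finset.mem_filter] at ht
    obtain ⟨-, ht0⟩ := ht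
    rw [hS, Finset.mem_filter]
    refine ⟨Finset.mem_univ _, h0 _, (3 * t⁻¹ + t) / 4, ?_⟩
    rw [hf]
    field_simp
    ring
  -- fibers have cardinality 2
  have hfiber : ∀ s ∈ S, (A.filter (fun t => f t = s)).card = 2 := by
    intro s hs
    rw [hS, Finset.mem_filter] at hs
    obtain ⟨-, hsne, b, hb⟩ := hs
    have hbne : b ≠ 0 := by
      intro h; rw [h] at hb; simp at hb; exact hsne hb
    have hkey : A.filter (fun t => f t = s) = {2 * b - (2 * s - 1), -(2 * b) - (2 * s - 1)} := by
      ext t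
      simp only [hA, hf, Finset.mem_filter, Finset.mem_univ, true_and, Finset.mem_insert,
        Finset.mem_singleton]
      constructor
      · rintro ⟨ht0, hts⟩
        have heq : t ^ 2 + (4 * s - 2) * t - 3 = 0 := by
          have : (3 * t⁻¹ - t + 2) / 4 = s := hts
          field_simp at this
          linear_combination -this
        have hsq : (t + (2 * s - 1)) ^ 2 = (2 * b) ^ 2 := by
          linear_combination heq + 4 * hb
        rcases sq_eq_sq_iff_eq_or_eq_neg.mp hsq with h | h
        · left; linear_combination h
        · right; linear_combination h
      · intro h
        have ht0 : ∀ u : F, u ^ 2 + (4 * s - 2) * u - 3 = 0 → u ≠ 0 := by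
          intro u hu h; rw [h] at hu; norm_num at hu
          exact hchar3 hu
        have hgoal : ∀ u : F, u ^ 2 + (4 * s - 2) * u - 3 = 0 →
            u ≠ 0 ∧ (3 * u⁻¹ - u + 2) / 4 = s := by
          intro u hu
          have hune := ht0 u hu
          refine ⟨hune, ?_⟩
          field_simp
          linear_combination -hu
        rcases h with h | h
        · exact hgoal t (by rw [h]; linear_combination -4 * hb)
        · exact hgoal t (by rw [h]; linear_combination -4 * hb)
    rw [hkey]
    rw [Finset.card_insert_of_notMem, Finset.card_singleton]
    simp only [Finset.mem_singleton]
    intro h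
    have h4b : (4 : F) * b = 0 := by linear_combination h
    rcases mul_eq_zero.mp h4b with h' | h'
    · exact hchar4 h'
    · exact hbne h'
  have hcardA : A.card = q - 1 := by
    rw [hA, Finset.filter_ne', Finset.card_erase_of_mem (Finset.mem_univ _),
      Finset.card_univ, hcard]
  have hcount : A.card = 2 * S.card := by
    rw [Finset.card_eq_sum_card_fiberwise hmaps]
    rw [Finset.sum_congr rfl hfiber]
    simp [mul_comm]
  have hqpos : 1 ≤ q := by
    rcases hodd with ⟨k, hk⟩; omega
  have hScard : S.card = (q - 1) / 2 := by omega
  rw [Nat.card_eq_fintype_card, Fintype.card_subtype]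
  exact hScard
end

section
/- Let k be a field of characteristic greater than 2, and let c be a nonzero element of k. The map a ↦ (c + 2ba - a^2)/(2a) from k \ {0} to k parametrizes exactly those s in k for which (s-b)^2 + c is a square in k; moreover a and -c/a give the same value of s, and a = -c/a if and only if (s-b)^2 + c = 0. -/
/-- Over a field `k` of characteristic greater than 2, with `c ≠ 0`, the map
`a ↦ (c + 2ba - a²)/(2a)` from `k \ {0}` to `k` parametrizes exactly those `s` for which
`(s-b)² + c` is a square; `a` and `-c/a` give the same value of `s`, and `a = -c/a` iff
`(s-b)² + c = 0`. -/
theorem stmt_2 (k : Type*) [Field k] (hchar : ringChar k ≠ 2) (b c : k) (hc : c ≠ 0) :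
    (∀ a : k, a ≠ 0 → ∃ y : k,
      ((c + 2 * b * a - a ^ 2) / (2 * a) - b) ^ 2 + c = y ^ 2) ∧
    (∀ s : k, (∃ y : k, (s - b) ^ 2 + c = y ^ 2) →
      ∃ a : k, a ≠ 0 ∧ s = (c + 2 * b * a - a ^ 2) / (2 * a)) ∧
    (∀ a : k, a ≠ 0 →
      (c + 2 * b * (-c / a) - (-c / a) ^ 2) / (2 * (-c / a)) =
        (c + 2 * b * a - a ^ 2) / (2 * a)) ∧
    (∀ a : k, a ≠ 0 →
      (a = -c / a ↔ ((c + 2 * b * a - a ^ 2) / (2 * a) - b) ^ 2 + c = 0)) := by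
  have h2 : (2 : k) ≠ 0 := Ring.two_ne_zero hchar
  refine ⟨fun a ha => ⟨(c + a ^ 2) / (2 * a), by field_simp; ring⟩, ?_, ?_, ?_⟩
  · rintro s ⟨y, hy⟩
    have ha : b - s + y ≠ 0 := by
      intro h0
      apply hc
      have h1 : (b - s + y) * (b - s - y) = -c := by linear_combination hy
      rw [h0, zero_mul] at h1
      exact neg_eq_zero.mp h1.symm
    refine ⟨b - s + y, ha, ?_⟩
    rw [eq_div_iff (mul_ne_zero h2 ha)]
    linear_combination -hy
  · intro a ha
    have hca : -c / a ≠ 0 := div_ne_zero (neg_ne_zero.mpr hc) ha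
    field_simp
    ring
  · intro a ha
    constructor
    · intro h
      have ha2 : a ^ 2 = -c := by
        field_simp at h
        linear_combination h
      field_simp
      linear_combination (a^2 + c) * ha2
    · intro h
      field_simp at h ⊢
      have key : (c + a ^ 2) ^ 2 = 0 := by linear_combination h
      have h0 : c + a ^ 2 = 0 := pow_eq_zero_iff (n := 2) (by norm_num) |>.mp key
      linear_combination h0
end

section
/- Let F_q be a finite field of odd characteristic and let b, c in F_q with c ≠ 0. If -c is not a square in F_q, then the number of s in F_q with (s-b)^2 + c a non-zero square is exactly (q-1)/2, and (s-b)^2 + c never vanishes. -/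
/-- Over a finite field `F` of odd characteristic with `q` elements, `c ≠ 0`, if `-c` is not
a square then the number of `s` with `(s-b)² + c` a non-zero square is `(q-1)/2`, and
`(s-b)² + c` never vanishes. -/
theorem stmt_3 (q : ℕ) (F : Type*) [Field F] [Fintype F]
    (hcard : Fintype.card F = q) (hchar : ringChar F ≠ 2)
    (b c : F) (hc : c ≠ 0) (hns : ¬ ∃ y : F, -c = y ^ 2) :
    Nat.card {s : F // ∃ y : F, y ≠ 0 ∧ (s - b) ^ 2 + c = y ^ 2} = (q - 1) / 2 ∧
    ∀ s : F, (s - b) ^ 2 + c ≠ 0 := by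
  classical
  have two_ne : (2 : F) ≠ 0 := Ring.two_ne_zero hchar
  have hnz : ∀ x : F, x ^ 2 + c ≠ 0 := by
    intro x h
    exact hns ⟨x, by linear_combination -h⟩
  -- the set of points on y^2 = x^2 + c
  set N : Finset (F × F) := Finset.univ.filter (fun p => p.2 ^ 2 = p.1 ^ 2 + c) with hN
  -- bijection with units
  have hNcard : N.card = q - 1 := by
    have : Fintype.card Fˣ = Fintype.card {p : F × F // p ∈ N} := by
      apply Fintype.card_congr
      refine ⟨fun u => ⟨((c / (u : F) - u) / 2, (c / (u : F) + u) / 2), ?_⟩,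
        fun p => Units.mk0 (p.1.2 - p.1.1) ?_, ?_, ?_⟩
      · simp only [hN, Finset.mem_filter, Finset.mem_univ, true_and]
        have hu : (u : F) ≠ 0 := u.ne_zero
        field_simp
        ring
      · intro h
        obtain ⟨⟨x, y⟩, hp⟩ := p
        simp only [hN, Finset.mem_filter, Finset.mem_univ, true_and] at hp
        simp only at h
        have : (y - x) * (y + x) = c := by linear_combination hp
        rw [h, zero_mul] at this
        exact hc this.symm
      · intro u
        have hu : (u : F) ≠ 0 := u.ne_zero
        ext
        simp only [Units.val_mk0]
        field_simp
        ring
      · intro p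
        obtain ⟨⟨x, y⟩, hp⟩ := p
        simp only [hN, Finset.mem_filter, Finset.mem_univ, true_and] at hp
        have hyx : y - x ≠ 0 := by
          intro h
          have : (y - x) * (y + x) = c := by linear_combination hp
          rw [h, zero_mul] at this
          exact hc this.symm
        have hdiv : c / (y - x) = y + x := by
          rw [div_eq_iff hyx]
          linear_combination -hp
        ext <;> simp only [Units.val_mk0, hdiv] <;> field_simp <;> ring
    rw [Fintype.card_coe] at this
    rw [← this, ← hcard]
    simp [Fintype.card_units]
  -- the set of good x
  set S : Finset F := Finset.univ.filter (fun x => ∃ y : F, y ^ 2 = x ^ 2 + c) with hS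
  have hfiber : N.card = 2 * S.card := by
    rw [Finset.card_eq_sum_card_fiberwise (f := fun p : F × F => p.1)
      (t := Finset.univ) (fun _ _ => Finset.mem_univ _)]
    have key : ∀ x : F, (N.filter (fun p => p.1 = x)).card =
        if x ∈ S then 2 else 0 := by
      intro x
      split_ifs with hx
      · simp only [hS, Finset.mem_filter, Finset.mem_univ, true_and] at hx
        obtain ⟨z, hz⟩ := hx
        have hz0 : z ≠ 0 := by
          intro h; apply hnz x; rw [← hz, h]; ring
        have : N.filter (fun p => p.1 = x) = {(x, z), (x, -z)} := by
          ext ⟨a, y⟩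
          simp only [hN, Finset.mem_filter, Finset.mem_univ, true_and,
            Finset.mem_insert, Finset.mem_singleton, Prod.mk.injEq]
          constructor
          · rintro ⟨hy, rfl⟩
            rw [← hz] at hy
            have h' : y * y = z * z := by linear_combination hy
            have := mul_self_eq_mul_self_iff.mp h'
            tauto
          · rintro (⟨rfl, rfl⟩ | ⟨rfl, rfl⟩) <;> refine ⟨?_, rfl⟩ <;>
              rw [← hz] <;> ring
        rw [this]
        rw [Finset.card_insert_of_notMem, Finset.card_singleton]
        simp only [Finset.mem_singleton, Prod.mk.injEq, not_and]
        intro _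
        intro h
        apply hz0
        have : (2 : F) * z = 0 := by linear_combination h
        rcases mul_eq_zero.mp this with h2 | h0
        · exact absurd h2 two_ne
        · exact h0
      · simp only [hS, Finset.mem_filter, Finset.mem_univ, true_and, not_exists] at hx
        rw [Finset.card_eq_zero]
        ext ⟨a, y⟩
        simp only [hN, Finset.mem_filter, Finset.mem_univ, true_and,
          Finset.notMem_empty, iff_false, not_and]
        rintro hy rfl
        exact hx y hy
      
    rw [Finset.sum_congr rfl (fun x _ => key x)]
    rw [Finset.sum_ite_mem, Finset.univ_inter, Finset.sum_const, smul_eq_mul]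
    exact Nat.mul_comm _ _
  have hScard : S.card = (q - 1) / 2 := by
    omega
  constructor
  · -- transfer to S via s ↦ s - b
    rw [Nat.card_eq_fintype_card, Fintype.card_subtype]
    rw [← hScard]
    apply Finset.card_nbij (fun s => s - b)
    · intro s hs
      simp only [hS, Finset.coe_filter, Set.mem_setOf_eq, Finset.mem_coe,
        Finset.mem_filter, Finset.mem_univ, true_and] at hs ⊢
      obtain ⟨y, _, hy⟩ := hs
      exact ⟨y, hy.symm⟩
    · intro s hs t ht hst
      simpa using sub_left_injective hst
    · intro x hx
      simp only [hS, Finset.coe_filter, Set.mem_setOf_eq, Set.mem_image, Finset.mem_coe,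
        Finset.mem_filter, Finset.mem_univ, true_and] at hx ⊢
      obtain ⟨y, hy⟩ := hx
      refine ⟨x + b, ⟨y, ?_, ?_⟩, by ring⟩
      · intro h; apply hnz x; rw [← hy, h]; ring
      · rw [show x + b - b = x by ring]; exact hy.symm
  · intro s h
    exact hnz (s - b) h
end

section
/- Let F_q be a finite field of odd characteristic and let b, c in F_q with c ≠ 0. If -c is a non-zero square in F_q, then the polynomial (s-b)^2 + c has exactly two roots in F_q, and the number of s in F_q with (s-b)^2 + c a non-zero square is exactly (q-3)/2. -/
/-!
Writing `x = s - b`, the equation `x² + c = y²` defines a conic with `q - 1` points, since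
`(x, y) ↦ x + y` identifies it with `Fˣ` (the inverse uses `(y - x)(y + x) = c`). Counting its
points fibrewise over `x`, each root of `x² + c` contributes one point and each `x` with `x² + c` a
non-zero square contributes two. As `-c` is a non-zero square, `x² + c` has two roots, so the
non-zero squares account for `q - 3` points.
-/

open Finset

section SquareRoots

variable {F : Type*} [Field F] [Fintype F] [DecidableEq F]

theorem card_sq_eq_sq (hF : ringChar F ≠ 2) {a : F} (ha : a ≠ 0) :
    #{x : F | x ^ 2 = a ^ 2} = 2 := by
  have hpair : ({x | x ^ 2 = a ^ 2} : Finset F) = {a, -a} := by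
    ext x
    simp only [mem_filter_univ, mem_insert, mem_singleton]
    exact sq_eq_sq_iff_eq_or_eq_neg
  rw [hpair, card_pair]
  exact fun h => ha ((Ring.eq_self_iff_eq_zero_of_char_ne_two hF).mp h.symm)

theorem card_sqrt_eq (hF : ringChar F ≠ 2) (a : F) :
    #{y : F | a = y ^ 2} =
      (if a = 0 then 1 else 0) + 2 * if ∃ y ≠ 0, a = y ^ 2 then 1 else 0 := by
  by_cases ha : a = 0
  · subst ha
    have hsqrt : ({y | 0 = y ^ 2} : Finset F) = {0} := by
      ext y
      simp only [mem_filter_univ, mem_singleton, eq_comm (a := (0 : F)), sq_eq_zero_iff]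
    have hnone : ¬∃ y ≠ 0, (0 : F) = y ^ 2 := fun ⟨_, hy, h⟩ => hy (sq_eq_zero_iff.mp h.symm)
    rw [hsqrt, card_singleton, if_pos rfl, if_neg hnone]
  by_cases hsq : ∃ y ≠ 0, a = y ^ 2
  · obtain ⟨y₁, hy₁, rfl⟩ := hsq
    rw [if_neg ha, if_pos ⟨y₁, hy₁, rfl⟩]
    simp_rw [eq_comm (a := y₁ ^ 2)]
    rw [card_sq_eq_sq hF hy₁]
  · rw [if_neg ha, if_neg hsq, card_eq_zero, filter_eq_empty_iff]
    exact fun y _ hy => hsq ⟨y, fun hy0 => ha (by rw [hy, hy0, sq, zero_mul]), hy⟩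

theorem card_apply_eq_sq {α : Type*} [Fintype α] (hF : ringChar F ≠ 2)
    (f : α → F) :
    #{p : α × F | f p.1 = p.2 ^ 2} = #{x | f x = 0} + 2 * #{x | ∃ y ≠ 0, f x = y ^ 2} := by
  rw [card_filter, Fintype.sum_prod_type]
  simp only [card_sqrt_eq hF, sum_add_distrib, ← mul_sum, sum_boole, Nat.cast_id]

end SquareRoots

section Conic

variable {F : Type*} [Field F]

theorem add_ne_zero_of_sq_add_eq_sq {c x y : F} (hc : c ≠ 0) (h : x ^ 2 + c = y ^ 2) :
    x + y ≠ 0 := by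
  intro hxy
  exact hc (by linear_combination h + (y - x) * hxy)

def conicEquivUnits (hF : ringChar F ≠ 2) {c : F} (hc : c ≠ 0) :
    {p : F × F // p.1 ^ 2 + c = p.2 ^ 2} ≃ Fˣ where
  toFun p := Units.mk0 (p.1.1 + p.1.2) (add_ne_zero_of_sq_add_eq_sq hc p.2)
  invFun u := ⟨((u - c * (u : F)⁻¹) / 2, (u + c * (u : F)⁻¹) / 2), by
    have := Ring.two_ne_zero hF
    have := u.ne_zero
    field_simp
    ring⟩
  left_inv := by
    rintro ⟨⟨x, y⟩, h⟩
    have hxy := add_ne_zero_of_sq_add_eq_sq hc h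
    have hinv : c * (x + y)⁻¹ = y - x := by
      field_simp
      linear_combination h
    have := Ring.two_ne_zero hF
    ext <;> simp only [Units.val_mk0, hinv] <;> field_simp <;> ring
  right_inv u := by
    have := Ring.two_ne_zero hF
    have := u.ne_zero
    ext
    simp only [Units.val_mk0]
    field_simp
    ring

theorem card_conic [Fintype F] [DecidableEq F] (hF : ringChar F ≠ 2) {c : F} (hc : c ≠ 0) :
    #{p : F × F | p.1 ^ 2 + c = p.2 ^ 2} = Fintype.card F - 1 := by
  rw [← Fintype.card_subtype, Fintype.card_congr (conicEquivUnits hF hc), Fintype.card_units]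

end Conic

theorem card_sq_add_eq_zero {F : Type*} [Field F] [Fintype F] [DecidableEq F]
    (hF : ringChar F ≠ 2) {c y₀ : F} (hy₀ : y₀ ≠ 0) (h : -c = y₀ ^ 2) :
    #{x : F | x ^ 2 + c = 0} = 2 := by
  rw [filter_congr (q := fun x => x ^ 2 = y₀ ^ 2) fun x _ => by rw [← h, add_eq_zero_iff_eq_neg],
    card_sq_eq_sq hF hy₀]

theorem Nat.card_subtype_sub_right {G : Type*} [AddGroup G] (p : G → Prop) (b : G) :
    Nat.card {s : G // p (s - b)} = Nat.card {x : G // p x} :=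
  Nat.card_congr ((Equiv.subRight b).subtypeEquiv fun _ => Iff.rfl)

/-- Over a finite field `F` of odd characteristic with `q` elements, `c ≠ 0`, if `-c` is a
non-zero square then `(s-b)² + c` has exactly two roots in `F`, and the number of `s` with
`(s-b)² + c` a non-zero square is `(q-3)/2`. -/
theorem stmt_4 (q : ℕ) (F : Type*) [Field F] [Fintype F]
    (hcard : Fintype.card F = q) (hchar : ringChar F ≠ 2)
    (b c : F) (hc : c ≠ 0) (hsq : ∃ y : F, y ≠ 0 ∧ -c = y ^ 2) :
    Nat.card {s : F // (s - b) ^ 2 + c = 0} = 2 ∧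
    Nat.card {s : F // ∃ y : F, y ≠ 0 ∧ (s - b) ^ 2 + c = y ^ 2} = (q - 3) / 2 := by
  classical
  obtain ⟨y₀, hy₀, hy₀sq⟩ := hsq
  have hroots := card_sq_add_eq_zero hchar hy₀ hy₀sq
  have hconic := card_conic hchar hc
  rw [card_apply_eq_sq hchar (fun x => x ^ 2 + c), hroots, hcard] at hconic
  rw [Nat.card_subtype_sub_right (fun x => x ^ 2 + c = 0),
    Nat.card_subtype_sub_right (fun x => ∃ y : F, y ≠ 0 ∧ x ^ 2 + c = y ^ 2),
    Nat.card_eq_fintype_card, Nat.card_eq_fintype_card, Fintype.card_subtype,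
    Fintype.card_subtype, hroots]
  omega
end

section
/- Let F_q have characteristic greater than 3 and let e in F_q be such that T^2 + T + e is irreducible over F_q. Then the number of pairs (r, s) in F_q × F_q satisfying r^2(4e-1) + r(4s^3 e^2 - 6s^2 e - 4se + 4s - 2) + (-s^4 e^2 + 6s^2 e - 4s + 3) = 0 is exactly q - 1. -/
/-!
Viewed as a quadratic in `r`, `H₂(r, s)` has discriminant
`(2 (e s² - s + 1))² · ((2 e s - 1)² + 3 (1 - 4 e))`. Since `1 - 4 e` is the discriminant of the
irreducible `T² + T + e`, it is a nonzero nonsquare, so `e ≠ 0` and `e s² - s + 1` (which has the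
same discriminant) never vanishes. Completing the square and dividing out the nonvanishing factor
turns the curve into `v² - (2 e s - 1)² = 3 (1 - 4 e)`, i.e. into the hyperbola `x y = 3 (1 - 4 e)`,
which has `q - 1` points.
-/

theorem natCast_ne_zero_of_lt_ringChar {R : Type*} [NonAssocSemiring R] {n : ℕ} (hn : n ≠ 0)
    (h : n < ringChar R) : (n : R) ≠ 0 := fun h0 =>
  (Nat.le_of_dvd (Nat.pos_of_ne_zero hn) ((ringChar.spec R n).mp h0)).not_gt h

open Polynomial in
theorem not_isSquare_discrim_of_irreducible {K : Type*} [Field K] [NeZero (2 : K)] {a b c : K}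
    (ha : a ≠ 0) (hirr : Irreducible (C a * X ^ 2 + C b * X + C c)) :
    ¬IsSquare (discrim a b c) := by
  rintro hsq
  obtain ⟨x, hx⟩ := exists_quadratic_eq_zero ha hsq
  have hroot : (C a * X ^ 2 + C b * X + C c).IsRoot x := by simpa [sq] using hx
  have hdeg : (2 : WithBot ℕ) = 1 :=
    (degree_quadratic ha).symm.trans (degree_eq_one_of_irreducible_of_root hirr hroot)
  exact absurd hdeg (by decide)

section Field

variable {K : Type*} [Field K]

def quadraticEquivSqDiscrim [NeZero (2 : K)] {A : K} (hA : A ≠ 0) (B C : K → K) :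
    {p : K × K // A * (p.1 * p.1) + B p.2 * p.1 + C p.2 = 0} ≃
      {p : K × K // p.1 ^ 2 = discrim A (B p.2) (C p.2)} :=
  Equiv.subtypeEquiv
    { toFun := fun p => (2 * A * p.1 + B p.2, p.2)
      invFun := fun p => ((p.1 - B p.2) / (2 * A), p.2)
      left_inv := fun p => Prod.ext (by field_simp; ring) rfl
      right_inv := fun p => Prod.ext (by field_simp; ring) rfl }
    fun p => (quadratic_eq_zero_iff_discrim_eq_sq hA p.1).trans eq_comm

def sqEqSqMulEquiv {g k : K → K} (hg : ∀ s, g s ≠ 0) :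
    {p : K × K // p.1 ^ 2 = g p.2 ^ 2 * k p.2} ≃ {p : K × K // p.1 ^ 2 = k p.2} :=
  Equiv.subtypeEquiv
    { toFun := fun p => (p.1 / g p.2, p.2)
      invFun := fun p => (g p.2 * p.1, p.2)
      left_inv := fun p => by ext <;> simp [mul_div_cancel₀ _ (hg p.2)]
      right_inv := fun p => by ext <;> simp [hg p.2] }
    fun p => by
      simp only [Equiv.coe_fn_mk]
      rw [div_pow, div_eq_iff (pow_ne_zero 2 (hg p.2)), mul_comm]

def sqEqSqAddEquivMulEq [NeZero (2 : K)] {a : K} (ha : a ≠ 0) (b c : K) :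
    {p : K × K // p.1 ^ 2 = (a * p.2 - b) ^ 2 + c} ≃ {p : K × K // p.1 * p.2 = c} :=
  Equiv.subtypeEquiv
    { toFun := fun p => (p.1 + (a * p.2 - b), p.1 - (a * p.2 - b))
      invFun := fun p => ((p.1 + p.2) / 2, ((p.1 - p.2) / 2 + b) / a)
      left_inv := fun p => by ext <;> field_simp <;> ring
      right_inv := fun p => by ext <;> field_simp <;> ring }
    fun p => by
      simp only [Equiv.coe_fn_mk]
      constructor <;> intro h <;> linear_combination h

def mulEqEquivUnits {c : K} (hc : c ≠ 0) : {p : K × K // p.1 * p.2 = c} ≃ Kˣ where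
  toFun p := Units.mk0 p.1.1 (left_ne_zero_of_mul (p.2.symm ▸ hc))
  invFun u := ⟨(u, c / u), mul_div_cancel₀ c u.ne_zero⟩
  left_inv p := by
    obtain ⟨⟨x, y⟩, rfl⟩ := p
    ext <;> simp [left_ne_zero_of_mul hc]
  right_inv u := by ext; rfl

end Field

open Polynomial in
/-- Over a finite field `F` with `q` elements, characteristic greater than 3, if
`T² + T + e` is irreducible over `F`, then the number of pairs `(r, s)` satisfying the
Cayley equation `H₂(r,s) = 0` for the pencil of intersection type (2,1,1) is exactly
`q - 1`. -/
theorem stmt_5 (q : ℕ) (F : Type*) [Field F] [Fintype F]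
    (hcard : Fintype.card F = q) (hchar : 3 < ringChar F) (e : F)
    (hirr : Irreducible (X ^ 2 + X + C e : F[X])) :
    Nat.card {p : F × F //
      p.1 ^ 2 * (4 * e - 1) +
        p.1 * (4 * p.2 ^ 3 * e ^ 2 - 6 * p.2 ^ 2 * e - 4 * p.2 * e + 4 * p.2 - 2) +
        (-p.2 ^ 4 * e ^ 2 + 6 * p.2 ^ 2 * e - 4 * p.2 + 3) = 0} = q - 1 := by
  have h2 : (2 : F) ≠ 0 := by exact_mod_cast natCast_ne_zero_of_lt_ringChar two_ne_zero (by omega)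
  have h3 : (3 : F) ≠ 0 := by exact_mod_cast natCast_ne_zero_of_lt_ringChar three_ne_zero hchar
  have : NeZero (2 : F) := ⟨h2⟩
  have hsq : ¬IsSquare (discrim 1 1 e) :=
    not_isSquare_discrim_of_irreducible one_ne_zero (by simpa using hirr)
  have he : e ≠ 0 := by rintro rfl; exact hsq ⟨1, by simp [discrim]⟩
  have hdisc : 1 - 4 * e ≠ 0 := fun h => hsq ⟨0, by rw [discrim]; linear_combination h⟩
  have hg : ∀ s : F, 2 * (e * s ^ 2 - s + 1) ≠ 0 := fun s h =>
    hsq ⟨2 * e * s - 1, by rw [discrim]; linear_combination -2 * e * h⟩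
  have hA : 4 * e - 1 ≠ 0 := fun h => hdisc (by linear_combination -h)
  calc _ = Nat.card {p : F × F // p.1 ^ 2 =
          (2 * (e * p.2 ^ 2 - p.2 + 1)) ^ 2 * ((2 * e * p.2 - 1) ^ 2 + 3 * (1 - 4 * e))} :=
        Nat.card_congr <| (Equiv.subtypeEquivRight fun p => Eq.congr_left (by ring)).trans <|
          (quadraticEquivSqDiscrim hA
            (fun s => 4 * s ^ 3 * e ^ 2 - 6 * s ^ 2 * e - 4 * s * e + 4 * s - 2)
            (fun s => -s ^ 4 * e ^ 2 + 6 * s ^ 2 * e - 4 * s + 3)).trans <|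
          Equiv.subtypeEquivRight fun p => Eq.congr_right (by rw [discrim]; ring)
    _ = Nat.card {p : F × F // p.1 * p.2 = 3 * (1 - 4 * e)} := Nat.card_congr <|
        (sqEqSqMulEquiv (k := fun s => (2 * e * s - 1) ^ 2 + 3 * (1 - 4 * e)) hg).trans
          (sqEqSqAddEquivMulEq (mul_ne_zero h2 he) 1 _)
    _ = q - 1 := by
        rw [Nat.card_congr (mulEqEquivUnits (mul_ne_zero h3 hdisc)), Nat.card_units,
          Nat.card_eq_fintype_card, hcard]
end

section
/- Let F_q have characteristic greater than 3. The number of pairs (r, s) in F_q × F_q with s ∉ {0,1}, r ∉ {0,1}, satisfying r^2 + (6s^2 - 4s^3 - 4s)r + s^4 = 0, is exactly q - 5. -/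
/-- Over a finite field `F` with `q` elements and characteristic greater than 3, the number
of pairs `(r, s)` with `r, s ∉ {0,1}` satisfying `r² + (6s² - 4s³ - 4s)r + s⁴ = 0` is
exactly `q - 5`. -/
theorem stmt_6 (q : ℕ) (F : Type*) [Field F] [Fintype F]
    (hcard : Fintype.card F = q) (hchar : 3 < ringChar F) :
    Nat.card {p : F × F // p.2 ≠ 0 ∧ p.2 ≠ 1 ∧ p.1 ≠ 0 ∧ p.1 ≠ 1 ∧
      p.1 ^ 2 + (6 * p.2 ^ 2 - 4 * p.2 ^ 3 - 4 * p.2) * p.1 + p.2 ^ 4 = 0} = q - 5 := by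
  classical
  have hch : CharP F (ringChar F) := ringChar.charP F
  have hnz : ∀ n : ℕ, 0 < n → n ≤ 3 → (n : F) ≠ 0 := by
    intro n hn hn3 h
    have hd := (CharP.cast_eq_zero_iff F (ringChar F) n).mp h
    have := Nat.le_of_dvd hn hd
    omega
  have h2 : (2:F) ≠ 0 := by have := hnz 2 (by norm_num) (by norm_num); exact_mod_cast this
  have h3 : (3:F) ≠ 0 := by have := hnz 3 (by norm_num) (by norm_num); exact_mod_cast this
  have h4 : (4:F) ≠ 0 := by
    have h : (4:F) = 2*2 := by norm_num
    rw [h]; exact mul_ne_zero h2 h2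
  have h12 : (12:F) ≠ 0 := by
    have h : (12:F) = 4*3 := by norm_num
    rw [h]; exact mul_ne_zero h4 h3
  set Cond : F × F → Prop := fun p => p.2 ≠ 0 ∧ p.2 ≠ 1 ∧ p.1 ≠ 0 ∧ p.1 ≠ 1 ∧
      p.1 ^ 2 + (6 * p.2 ^ 2 - 4 * p.2 ^ 3 - 4 * p.2) * p.1 + p.2 ^ 4 = 0 with hCond
  set TCond : F → Prop := fun t => t ≠ 0 ∧ t ≠ 1 ∧ t ≠ -1 ∧ t ≠ 2 ∧ 1 - 2*t ≠ 0 with hTCond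
  let φ : F → F × F := fun t => (t^3*(t-2)/(1-2*t), t*(t-2)/(1-2*t))
  have hmem : ∀ t : F, TCond t → Cond (φ t) := by
    rintro t ⟨ht0, ht1, htm1, ht2, htd⟩
    have ht2' : t - 2 ≠ 0 := sub_ne_zero.mpr ht2
    refine ⟨?_, ?_, ?_, ?_, ?_⟩
    · exact div_ne_zero (mul_ne_zero ht0 ht2') htd
    · intro h
      have h' : t*(t-2) = 1*(1-2*t) := (div_eq_iff htd).mp h
      have key : (t-1)*(t+1) = 0 := by linear_combination h'
      rcases mul_eq_zero.mp key with h'' | h''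
      · exact ht1 (by linear_combination h'')
      · exact htm1 (by linear_combination h'')
    · exact div_ne_zero (mul_ne_zero (pow_ne_zero 3 ht0) ht2') htd
    · intro h
      have h' : t^3*(t-2) = 1*(1-2*t) := (div_eq_iff htd).mp h
      have key : (t-1)^3*(t+1) = 0 := by linear_combination h'
      rcases mul_eq_zero.mp key with h'' | h''
      · exact ht1 (by linear_combination (pow_eq_zero_iff (three_ne_zero)).mp h'')
      · exact htm1 (by linear_combination h'')
    · show (t^3*(t-2)/(1-2*t)) ^ 2 + (6 * (t*(t-2)/(1-2*t)) ^ 2 - 4 * (t*(t-2)/(1-2*t)) ^ 3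
          - 4 * (t*(t-2)/(1-2*t))) * (t^3*(t-2)/(1-2*t)) + (t*(t-2)/(1-2*t)) ^ 4 = 0
      linear_combination (t^4*(t-2)^4*(1+2*t)*((1-2*t)⁻¹)^3
        - t^4*(t-2)^3*(t+2)*((1-2*t)⁻¹)^2) * (mul_inv_cancel₀ htd)
  let f : {t : F // TCond t} → {p : F × F // Cond p} := fun x => ⟨φ x.1, hmem x.1 x.2⟩
  let G : F × F → F := fun p => (p.2^2 - p.1)/(2*p.2*(p.2-1))
  have hleft : ∀ t : F, TCond t → G (φ t) = t := by
    rintro t ht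
    obtain ⟨hs0, hs1, -, -, -⟩ := hmem t ht
    obtain ⟨-, -, -, -, htd⟩ := ht
    have hD : 2*(φ t).2*((φ t).2-1) ≠ 0 :=
      mul_ne_zero (mul_ne_zero h2 hs0) (sub_ne_zero.mpr hs1)
    show ((φ t).2^2 - (φ t).1)/(2*(φ t).2*((φ t).2-1)) = t
    rw [div_eq_iff hD]
    show (t*(t-2)/(1-2*t))^2 - t^3*(t-2)/(1-2*t)
        = t * (2*(t*(t-2)/(1-2*t))*((t*(t-2)/(1-2*t))-1))
    linear_combination ((t*(t-2))^2*(1-2*t)⁻¹) * (mul_inv_cancel₀ htd)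
  have hbij : Function.Bijective f := by
    constructor
    · rintro ⟨t, ht⟩ ⟨t', ht'⟩ hff
      have h : φ t = φ t' := congrArg Subtype.val hff
      have : t = t' := by
        rw [← hleft t ht, ← hleft t' ht', h]
      exact Subtype.ext this
    · rintro ⟨⟨r, s⟩, hs0, hs1, hr0, hr1, hE⟩
      have hs1' : s - 1 ≠ 0 := sub_ne_zero.mpr hs1
      have hD : (2*s*(s-1)) ≠ 0 := mul_ne_zero (mul_ne_zero h2 hs0) hs1'
      set t : F := (s^2 - r)/(2*s*(s-1)) with htdef
      have ht : t * (2*s*(s-1)) = s^2 - r := div_mul_cancel₀ _ hD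
      have hE' : r ^ 2 + (6 * s ^ 2 - 4 * s ^ 3 - 4 * s) * r + s ^ 4 = 0 := hE
      have hrs : r ≠ s := by
        intro h
        have key : 3*s^2*(s-1)^2 = 0 := by
          linear_combination -hE' + (r - 4*s^3 + 6*s^2 - 3*s)*h
        exact mul_ne_zero (mul_ne_zero h3 (pow_ne_zero 2 hs0)) (pow_ne_zero 2 hs1') key
      have hd' : 1 - 2*t ≠ 0 := by
        intro h
        have hne : (1-2*t)*(2*s*(s-1)) = 2*(r-s) := by linear_combination -2*ht
        rw [h, zero_mul] at hne
        exact mul_ne_zero h2 (sub_ne_zero.mpr hrs) hne.symm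
      have ht0 : t ≠ 0 := by
        intro h
        rw [h, zero_mul] at ht
        have key : 4*s^3*(s-1)^2 = 0 := by
          linear_combination -hE' + (-r + 4*s^3 - 7*s^2 + 4*s)*ht.symm
        exact mul_ne_zero (mul_ne_zero h4 (pow_ne_zero 3 hs0)) (pow_ne_zero 2 hs1') key
      have ht1 : t ≠ 1 := by
        intro h
        rw [h, one_mul] at ht
        have key : 4*s^2*(s-1)^3 = 0 := by
          linear_combination hE' + (-r + 4*s^3 - 5*s^2 + 2*s)*ht
        exact mul_ne_zero (mul_ne_zero h4 (pow_ne_zero 2 hs0)) (pow_ne_zero 3 hs1') key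
      have htm1 : t ≠ -1 := by
        intro h
        rw [h] at ht
        have key : 12*s^2*(s-1)^3 = 0 := by
          linear_combination -hE' + (r - 4*s^3 + 9*s^2 - 6*s)*ht
        exact mul_ne_zero (mul_ne_zero h12 (pow_ne_zero 2 hs0)) (pow_ne_zero 3 hs1') key
      have ht2 : t ≠ 2 := by
        intro h
        rw [h] at ht
        have key : 12*s^3*(s-1)^2 = 0 := by
          linear_combination hE' + (-r + 4*s^3 - 3*s^2)*ht
        exact mul_ne_zero (mul_ne_zero h12 (pow_ne_zero 3 hs0)) (pow_ne_zero 2 hs1') key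
      refine ⟨⟨t, ht0, ht1, htm1, ht2, hd'⟩, ?_⟩
      have comp2 : t*(t-2)/(1-2*t) = s := by
        rw [div_eq_iff hd']
        refine mul_left_cancel₀ (pow_ne_zero 2 hD) ?_
        linear_combination (2*s^2*t - 2*s*t + 4*s^3 - 7*s^2 + 4*s - r)*ht + hE'
      have ht2s : t^2*s = r := by
        refine mul_left_cancel₀ (pow_ne_zero 2 hD) ?_
        linear_combination s*(t*(2*s*(s-1)) + s^2 - r)*ht + s*hE'
      have comp1 : t^3*(t-2)/(1-2*t) = r := by
        have h : t^3*(t-2)/(1-2*t) = t^2 * (t*(t-2)/(1-2*t)) := by ring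
        rw [h, comp2]; exact ht2s
      exact Subtype.ext (Prod.ext comp1 comp2)
  have hcount : Nat.card {t : F // TCond t} = q - 5 := by
    rw [Nat.card_eq_fintype_card, Fintype.card_subtype]
    have hset : (Finset.univ.filter fun t : F => TCond t)
        = ({0, 1, -1, 2, 2⁻¹} : Finset F)ᶜ := by
      ext t
      simp only [Finset.mem_filter, Finset.mem_univ, true_and, Finset.mem_compl,
        Finset.mem_insert, Finset.mem_singleton, hTCond]
      constructor
      · rintro ⟨a, b, c, d, e⟩ (h | h | h | h | h)
        · exact a h
        · exact b h
        · exact c h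
        · exact d h
        · apply e
          rw [h]
          have := mul_inv_cancel₀ h2
          linear_combination -this
      · intro h
        push_neg at h
        obtain ⟨a, b, c, d, e⟩ := h
        refine ⟨a, b, c, d, ?_⟩
        intro hc
        apply e
        have h1 : t*2 = 1 := by linear_combination -hc
        exact eq_inv_of_mul_eq_one_left h1
    rw [hset, Finset.card_compl, hcard]
    congr 1
    have hinv : (2:F)*2⁻¹ = 1 := mul_inv_cancel₀ h2
    have n01 : (0:F) ≠ 1 := zero_ne_one
    have n0m1 : (0:F) ≠ -1 := by intro h; exact one_ne_zero (by linear_combination h)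
    have n02 : (0:F) ≠ 2 := fun h => h2 h.symm
    have n0i : (0:F) ≠ 2⁻¹ := fun h => (inv_ne_zero h2) h.symm
    have n1m1 : (1:F) ≠ -1 := by intro h; exact h2 (by linear_combination h)
    have n12 : (1:F) ≠ 2 := by intro h; exact one_ne_zero (by linear_combination -h)
    have n1i : (1:F) ≠ 2⁻¹ := by
      intro h
      have h' := hinv
      rw [← h] at h'
      exact one_ne_zero (by linear_combination h')
    have nm12 : (-1:F) ≠ 2 := by intro h; exact h3 (by linear_combination -h)
    have nm1i : (-1:F) ≠ 2⁻¹ := by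
      intro h
      have h' := hinv
      rw [← h] at h'
      exact h3 (by linear_combination -h')
    have n2i : (2:F) ≠ 2⁻¹ := by
      intro h
      have h' := hinv
      rw [← h] at h'
      exact h3 (by linear_combination h')
    rw [Finset.card_insert_of_notMem (by simp [n01, n0m1, n02, n0i]),
      Finset.card_insert_of_notMem (by simp [n1m1, n12, n1i]),
      Finset.card_insert_of_notMem (by simp [nm12, nm1i]),
      Finset.card_insert_of_notMem (by simp [n2i]),
      Finset.card_singleton]
  calc Nat.card {p : F × F // Cond p} = Nat.card {t : F // TCond t} :=
        (Nat.card_eq_of_bijective f hbij).symm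
    _ = q - 5 := hcount
end

section
/- In GL_2(Z/l^(k+1) Z) with l an odd prime, the centralizer of the matrix [[1, l^v],[0, 1]] (for 0 ≤ v ≤ k) consists of the matrices [[a, b],[c, d]] with (a - d)·l^v = 0 and c·l^v = 0 in Z/l^(k+1)Z, and has cardinality φ(l^(k+1)) · l^v · l^(k+1) · l^v. -/
/-!
A matrix `[[a, b], [c, d]]` commutes with `[[1, t], [0, 1]]` iff `(a - d) t = 0` and `c t = 0`.
When every element annihilating `t` is nilpotent, as for `t = l^v` in `ℤ/l^(k+1)` whose
annihilator is `l^(k+1-v) ℤ/l^(k+1)`, the determinant `d² + ((a - d) d - b c)` of such a matrix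
is a unit exactly when `d` is. So the centralizer is parametrised by
`(d, a - d, b, c) ∈ Rˣ × Ann t × R × Ann t`, and the annihilator of `l^v` has `l^v` elements.
-/

open Matrix

section Unipotent

variable {R : Type*} [CommRing R] {t : R} {u : GL (Fin 2) R}

theorem mem_centralizer_iff_of_coe_eq (hu : (u : Matrix (Fin 2) (Fin 2) R) = !![1, t; 0, 1])
    (M : GL (Fin 2) R) :
    M ∈ Subgroup.centralizer {u} ↔
      ((M : Matrix (Fin 2) (Fin 2) R) 0 0 - (M : Matrix (Fin 2) (Fin 2) R) 1 1) * t = 0 ∧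
        (M : Matrix (Fin 2) (Fin 2) R) 1 0 * t = 0 := by
  rw [Subgroup.mem_centralizer_singleton_iff, Units.ext_iff, Units.val_mul, Units.val_mul, hu,
    eta_fin_two (M : Matrix (Fin 2) (Fin 2) R)]
  simp only [mul_fin_two, ← Matrix.ext_iff, Fin.forall_fin_two, of_apply, cons_val_zero,
    cons_val_one, cons_val_fin_one, mul_one, one_mul, mul_zero, zero_mul, add_zero, zero_add,
    true_and]
  constructor
  · rintro ⟨⟨-, h01⟩, h10⟩
    exact ⟨by linear_combination h01, by linear_combination h10⟩
  · rintro ⟨hdiag, hlow⟩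
    exact ⟨⟨by linear_combination -hlow, by linear_combination hdiag⟩,
      by linear_combination hlow⟩

theorem isUnit_add_iff_of_isNilpotent {x r : R} (hr : IsNilpotent r) :
    IsUnit (x + r) ↔ IsUnit x :=
  ⟨fun h => by simpa using hr.neg.isUnit_add_left_of_commute h (Commute.all _ _),
    fun h => hr.isUnit_add_left_of_commute h (Commute.all _ _)⟩

theorem isUnit_det_iff_of_isNilpotent {s c : R} (hs : IsNilpotent s) (hc : IsNilpotent c)
    (b d : R) : IsUnit !![d + s, b; c, d].det ↔ IsUnit d := by
  have hnil : IsNilpotent (s * d - b * c) :=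
    Commute.isNilpotent_sub (Commute.all _ _) ((Commute.all _ _).isNilpotent_mul_right hs)
      ((Commute.all _ _).isNilpotent_mul_left hc)
  rw [det_fin_two_of, show (d + s) * d - b * c = d * d + (s * d - b * c) by ring,
    isUnit_add_iff_of_isNilpotent hnil, isUnit_mul_self_iff]

theorem isUnit_apply_one_one_of_mem_centralizer
    (hu : (u : Matrix (Fin 2) (Fin 2) R) = !![1, t; 0, 1])
    (hnil : ∀ x : R, x * t = 0 → IsNilpotent x) {M : GL (Fin 2) R}
    (hM : M ∈ Subgroup.centralizer {u}) : IsUnit ((M : Matrix (Fin 2) (Fin 2) R) 1 1) := by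
  obtain ⟨hdiag, hlow⟩ := (mem_centralizer_iff_of_coe_eq hu M).1 hM
  have hdet := (GeneralLinearGroup.det M).isUnit
  rwa [GeneralLinearGroup.val_det_apply, eta_fin_two (M : Matrix (Fin 2) (Fin 2) R),
    ← add_sub_cancel ((M : Matrix (Fin 2) (Fin 2) R) 1 1) ((M : Matrix (Fin 2) (Fin 2) R) 0 0),
    isUnit_det_iff_of_isNilpotent (hnil _ hdiag) (hnil _ hlow)] at hdet

noncomputable def centralizerEquivOfIsNilpotent
    (hu : (u : Matrix (Fin 2) (Fin 2) R) = !![1, t; 0, 1])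
    (hnil : ∀ x : R, x * t = 0 → IsNilpotent x) :
    Subgroup.centralizer {u} ≃ Rˣ × {x : R // x * t = 0} × R × {x : R // x * t = 0} where
  toFun M :=
    have hM := (mem_centralizer_iff_of_coe_eq hu M).1 M.2
    ((isUnit_apply_one_one_of_mem_centralizer hu hnil M.2).unit, ⟨_, hM.1⟩,
      (M.1 : Matrix (Fin 2) (Fin 2) R) 0 1, ⟨_, hM.2⟩)
  invFun := fun ⟨d, s, b, c⟩ =>
    ⟨GeneralLinearGroup.mk'' !![d + s, b; c, d]
      ((isUnit_det_iff_of_isNilpotent (hnil _ s.2) (hnil _ c.2) b d).2 d.isUnit),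
      (mem_centralizer_iff_of_coe_eq hu _).2 (by simpa using ⟨s.2, c.2⟩)⟩
  left_inv M := Subtype.ext <| GeneralLinearGroup.ext fun i j => by
    fin_cases i <;> fin_cases j <;> simp
  right_inv := fun ⟨d, s, b, c⟩ => by
    ext <;> simp

end Unipotent

namespace ZMod

theorem mul_natCast_eq_zero_iff_mem_zmultiples {n a b : ℕ} [NeZero n] (hab : a * b = n)
    (x : ZMod n) : x * b = 0 ↔ x ∈ AddSubgroup.zmultiples (a : ZMod n) := by
  subst hab
  have hb : 0 < b := Nat.pos_of_ne_zero (right_ne_zero_of_mul (NeZero.ne (a * b)))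
  rw [AddSubgroup.mem_zmultiples_iff]
  constructor
  · intro hx
    rw [← natCast_zmod_val x, ← Nat.cast_mul, natCast_eq_zero_iff,
      Nat.mul_dvd_mul_iff_right hb] at hx
    obtain ⟨m, hm⟩ := hx
    exact ⟨m, by
      rw [← natCast_zmod_val x, hm, natCast_zsmul, nsmul_eq_mul, Nat.cast_mul, Nat.cast_comm]⟩
  · rintro ⟨m, rfl⟩
    rw [zsmul_eq_mul, mul_assoc, ← Nat.cast_mul, natCast_self, mul_zero]

theorem card_mul_natCast_eq_zero {n a b : ℕ} [NeZero n] (hab : a * b = n) :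
    Nat.card {x : ZMod n // x * b = 0} = b := by
  have ha : 0 < a := Nat.pos_of_ne_zero (left_ne_zero_of_mul (hab ▸ NeZero.ne n))
  rw [Nat.card_congr (Equiv.subtypeEquivRight (mul_natCast_eq_zero_iff_mem_zmultiples hab)),
    Nat.card_zmultiples, addOrderOf_coe _ (NeZero.ne n), ← hab, Nat.gcd_mul_right_left,
    Nat.mul_div_cancel_left _ ha]

theorem isNilpotent_of_mul_natCast_eq_zero {n a b m : ℕ} [NeZero n] (hab : a * b = n)
    (hm : n ∣ a ^ m) {x : ZMod n} (hx : x * b = 0) : IsNilpotent x := by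
  obtain ⟨k, rfl⟩ := AddSubgroup.mem_zmultiples_iff.1
    ((mul_natCast_eq_zero_iff_mem_zmultiples hab x).1 hx)
  rw [zsmul_eq_mul]
  exact (Commute.all _ _).isNilpotent_mul_left
    ⟨m, by rw [← Nat.cast_pow, natCast_eq_zero_iff]; exact hm⟩

end ZMod

theorem stmt_11_general (l k v : ℕ) (hl : l.Prime) (hv : v ≤ k)
    (u : GL (Fin 2) (ZMod (l ^ (k + 1))))
    (hu : (u : Matrix (Fin 2) (Fin 2) (ZMod (l ^ (k + 1)))) =
      !![1, (l : ZMod (l ^ (k + 1))) ^ v; 0, 1]) :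
    (∀ M : GL (Fin 2) (ZMod (l ^ (k + 1))), M ∈ Subgroup.centralizer {u} ↔
      ((M : Matrix (Fin 2) (Fin 2) (ZMod (l ^ (k + 1)))) 0 0 -
          (M : Matrix (Fin 2) (Fin 2) (ZMod (l ^ (k + 1)))) 1 1) *
          (l : ZMod (l ^ (k + 1))) ^ v = 0 ∧
        (M : Matrix (Fin 2) (Fin 2) (ZMod (l ^ (k + 1)))) 1 0 *
          (l : ZMod (l ^ (k + 1))) ^ v = 0) ∧
    Nat.card (Subgroup.centralizer {u}) =
      Nat.totient (l ^ (k + 1)) * l ^ v * l ^ (k + 1) * l ^ v := by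
  have : NeZero (l ^ (k + 1)) := ⟨pow_ne_zero _ hl.ne_zero⟩
  have hsplit : l ^ (k + 1 - v) * l ^ v = l ^ (k + 1) := by
    rw [← pow_add, Nat.sub_add_cancel (by omega)]
  have hnil (x : ZMod (l ^ (k + 1))) (hx : x * (l : ZMod (l ^ (k + 1))) ^ v = 0) :
      IsNilpotent x :=
    ZMod.isNilpotent_of_mul_natCast_eq_zero hsplit
      (pow_dvd_pow_of_dvd (dvd_pow_self l (by omega)) (k + 1)) (by exact_mod_cast hx)
  have hann := ZMod.card_mul_natCast_eq_zero hsplit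
  push_cast at hann
  refine ⟨mem_centralizer_iff_of_coe_eq hu, ?_⟩
  rw [Nat.card_congr (centralizerEquivOfIsNilpotent hu hnil), Nat.card_prod, Nat.card_prod,
    Nat.card_prod, hann, Nat.card_zmod, Nat.card_eq_fintype_card (α := (ZMod _)ˣ),
    ZMod.card_units_eq_totient]
  ring

/-- In `GL₂(ℤ/l^(k+1)ℤ)` with `l` an odd prime, the centralizer of `[[1, l^v],[0,1]]`
(for `0 ≤ v ≤ k`) consists of the matrices `[[a,b],[c,d]]` with `(a-d)·l^v = 0` and
`c·l^v = 0`, and has cardinality `φ(l^(k+1)) · l^v · l^(k+1) · l^v`. -/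
theorem stmt_11 (l k v : ℕ) (hl : l.Prime) (hlodd : Odd l) (hv : v ≤ k)
    (u : GL (Fin 2) (ZMod (l ^ (k + 1))))
    (hu : (u : Matrix (Fin 2) (Fin 2) (ZMod (l ^ (k + 1)))) =
      !![1, (l : ZMod (l ^ (k + 1))) ^ v; 0, 1]) :
    (∀ M : GL (Fin 2) (ZMod (l ^ (k + 1))), M ∈ Subgroup.centralizer {u} ↔
      ((M : Matrix (Fin 2) (Fin 2) (ZMod (l ^ (k + 1)))) 0 0 -
          (M : Matrix (Fin 2) (Fin 2) (ZMod (l ^ (k + 1)))) 1 1) *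
          (l : ZMod (l ^ (k + 1))) ^ v = 0 ∧
        (M : Matrix (Fin 2) (Fin 2) (ZMod (l ^ (k + 1)))) 1 0 *
          (l : ZMod (l ^ (k + 1))) ^ v = 0) ∧
    Nat.card (Subgroup.centralizer {u}) =
      Nat.totient (l ^ (k + 1)) * l ^ v * l ^ (k + 1) * l ^ v :=
  stmt_11_general l k v hl hv u hu
end
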